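/- If D is a generalized skew diagram, then MaxG(D) ≥ sf(D), i.e., there exists a diagram in KKD(D) whose number of ghost cells equals the number of snowflakes in snow(D). -/
import Mathlib


open Finset

/-- A diagram: a finite set of cells in ℕ×ℕ (recorded as (row, column)),
some of which may be marked as ghost cells. -/
structure Diagram where
  cells : Finset (ℕ × ℕ)
  ghosts : Finset (ℕ × ℕ)
deriving DecidableEq

/-- `(r,c)` is the rightmost cell (ghost or not) in row `r` of `D`. -/
def Rightmost (D : Diagram) (r c : ℕ) : Prop :=
  (r, c) ∈ D.cells ∧ ∀ c' > c, (r, c') ∉ D.cells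

/-- A nontrivial K-Kohnert move at row `r` of `D` is possible, taking the
rightmost cell `(r,c)` of row `r` (a non-ghost cell) down to the highest empty
position `(rhat, c)` below it in column `c`, with no ghost cell in between. -/
def KohnertMovable (D : Diagram) (r c rhat : ℕ) : Prop :=
  Rightmost D r c ∧ (r, c) ∉ D.ghosts ∧
  1 ≤ rhat ∧ rhat < r ∧ (rhat, c) ∉ D.cells ∧
  ∀ r', rhat < r' → r' < r → (r', c) ∈ D.cells ∧ (r', c) ∉ D.ghosts

/-- Result of a Kohnert move: the cell `(r,c)` moves to `(rhat,c)`. -/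
def applyKohnert (D : Diagram) (r c rhat : ℕ) : Diagram :=
  ⟨insert (rhat, c) (D.cells.erase (r, c)), D.ghosts⟩

/-- Result of a ghost move: the cell `(r,c)` moves to `(rhat,c)`, leaving a
ghost cell at `(r,c)`. -/
def applyGhost (D : Diagram) (r c rhat : ℕ) : Diagram :=
  ⟨insert (rhat, c) D.cells, insert (r, c) D.ghosts⟩

/-- One (nontrivial) K-Kohnert move. -/
def KStep (D T : Diagram) : Prop :=
  ∃ r c rhat, KohnertMovable D r c rhat ∧
    (T = applyKohnert D r c rhat ∨ T = applyGhost D r c rhat)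

/-- One (nontrivial) ghost move. -/
def GStep (D T : Diagram) : Prop :=
  ∃ r c rhat, KohnertMovable D r c rhat ∧ T = applyGhost D r c rhat

/-- All diagrams obtainable from `D` by sequences of K-Kohnert moves. -/
def KKD (D : Diagram) : Set Diagram := {T | Relation.ReflTransGen KStep D T}

/-- All diagrams obtainable from `D` by sequences of ghost moves. -/
def GKD (D : Diagram) : Set Diagram := {T | Relation.ReflTransGen GStep D T}

/-- Maximum number of ghost cells over `KKD D`. -/
noncomputable def MaxG (D : Diagram) : ℕ :=
  sSup {n | ∃ T ∈ KKD D, T.ghosts.card = n}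

/-- Maximum number of ghost cells over `GKD D`. -/
noncomputable def MaxGhat (D : Diagram) : ℕ :=
  sSup {n | ∃ T ∈ GKD D, T.ghosts.card = n}

/-- Dark clouds of a ghost-free diagram: working from the top row down, mark in
each row the rightmost cell having no marked cell above it in its column. -/
def dark (D : Finset (ℕ × ℕ)) : Finset (ℕ × ℕ) :=
  ((List.range (D.sup Prod.fst + 1)).reverse).foldl
    (fun acc r =>
      let cand := (D.filter (fun p => p.1 = r ∧ ∀ q ∈ acc, q.2 ≠ p.2)).image Prod.snd
      if h : cand.Nonempty then insert (r, cand.max' h) acc else acc) ∅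

/-- Snowflakes of the snow diagram: empty positions lying below a dark cloud
in its column. -/
def snowflakes (D : Finset (ℕ × ℕ)) : Finset (ℕ × ℕ) :=
  ((Finset.range (D.sup Prod.fst + 1)) ×ˢ (D.image Prod.snd)).filter
    (fun p => 1 ≤ p.1 ∧ p ∉ D ∧ ∃ q ∈ dark D, q.2 = p.2 ∧ p.1 < q.1)

/-- Number of snowflakes of the snow diagram of a ghost-free diagram. -/
def sf (D : Finset (ℕ × ℕ)) : ℕ := (snowflakes D).card

/-- A generalized skew diagram: each nonempty row is a contiguous run of cells,
and both leftmost and rightmost columns weakly increase with the row index. -/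
def IsGenSkew (D : Finset (ℕ × ℕ)) : Prop :=
  (∀ p ∈ D, 1 ≤ p.1 ∧ 1 ≤ p.2) ∧
  (∀ r c₁ c c₂, (r, c₁) ∈ D → (r, c₂) ∈ D → c₁ ≤ c → c ≤ c₂ → (r, c) ∈ D) ∧
  (∀ r₁ r₂ c₁, r₁ < r₂ → (r₁, c₁) ∈ D → (∃ c, (r₂, c) ∈ D) →
      ∃ c₂, c₁ ≤ c₂ ∧ (r₂, c₂) ∈ D) ∧
  (∀ r₁ r₂ c₂, r₁ < r₂ → (r₂, c₂) ∈ D → (∃ c, (r₁, c) ∈ D) →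
      ∃ c₁, c₁ ≤ c₂ ∧ (r₁, c₁) ∈ D)

/-- `Key(D)`: the minimal key diagram containing `D`. -/
def keyOf (D : Finset (ℕ × ℕ)) : Finset (ℕ × ℕ) :=
  D.biUnion (fun p => (Finset.Icc 1 p.2).image (fun c => (p.1, c)))

/-- Largest index `i < j` (0-indexed) with `α_i > 0`. -/
def prevIdx (α : List ℕ) (j : ℕ) : Option ℕ :=
  ((List.range j).filter (fun i => 0 < α.getD i 0)).max?

/-- Contribution of step 2 of the skew-diagram construction at (0-indexed) row `j`. -/
def step2contrib (α : List ℕ) (j : ℕ) : ℕ :=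
  if 0 < α.getD j 0 then
    match prevIdx α j with
    | none => 0
    | some i => α.getD i 0 - α.getD j 0
  else 0

/-- Total rightward shift of (0-indexed) row `k` in the skew-diagram construction. -/
def rowShift (α : List ℕ) (k : ℕ) : ℕ :=
  (∑ j ∈ Finset.range (k + 1), step2contrib α j) +
    ((List.range k).filter (fun i => α.getD i 0 = 0)).length

/-- The skew diagram `S(α)` of a weak composition `α`. -/
def skewDiagram (α : List ℕ) : Finset (ℕ × ℕ) :=
  (Finset.range α.length).biUnion (fun i =>
    (Finset.Icc 1 (α.getD i 0)).image (fun c => (i + 1, c + rowShift α i)))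

/-- The lock diagram of a weak composition `α`: `α_i` right-justified cells in row `i`. -/
def lockDiagram (α : List ℕ) : Finset (ℕ × ℕ) :=
  (Finset.range α.length).biUnion (fun i =>
    (Finset.range (α.getD i 0)).image (fun j => (i + 1, α.foldr max 0 - j)))

/-- `L` is a lock-tableau labeling of content `α` on the given set of cells. -/
def IsLockLabeling (α : List ℕ) (cells : Finset (ℕ × ℕ)) (L : ℕ × ℕ → ℕ) : Prop :=
  (∀ p ∈ cells, 1 ≤ L p ∧ L p ≤ α.length) ∧
  (∀ j, 1 ≤ j → j ≤ α.length → 0 < α.getD (j - 1) 0 →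
    ∀ c, α.foldr max 0 - α.getD (j - 1) 0 + 1 ≤ c → c ≤ α.foldr max 0 →
      ∃! p, p ∈ cells ∧ p.2 = c ∧ L p = j) ∧
  (∀ p ∈ cells, p.1 ≤ L p) ∧
  (∀ p ∈ cells, ∀ q ∈ cells, L p = L q → p.2 < q.2 → q.1 ≤ p.1) ∧
  (∀ p ∈ cells, ∀ q ∈ cells, p.2 = q.2 → p.1 < q.1 → L p < L q)

/-- Label of the position `(r,c)` of `T`: for a ghost cell, the label of the
highest non-ghost cell weakly below it in column `c`. -/
def ghostLabel (T : Diagram) (L : ℕ × ℕ → ℕ) (r c : ℕ) : ℕ :=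
  L (((T.cells \ T.ghosts).filter (fun p => p.2 = c ∧ p.1 ≤ r)).sup Prod.fst, c)

/-- The labels, within one column with row set `Rc`, of the modified snow
diagram, where `U` is the set of rows occupied in later columns; rows are
processed from top to bottom. -/
def colLabelList (Rc U : Finset ℕ) : List (ℕ × ℕ) :=
  ((Rc.sort (· ≤ ·)).reverse).foldl
    (fun acc r =>
      if r ∈ U then (r, r) :: acc
      else
        let cand := U.filter (fun s => s < r ∧ ∀ q ∈ acc, q.2 ≠ s)
        if h : cand.Nonempty then (r, cand.max' h) :: acc else (r, 1) :: acc)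
    []

/-- The label of a cell `p ∈ D` in the modified snow diagram `snow-hat(D)`. -/
def hatLabel (D : Finset (ℕ × ℕ)) (p : ℕ × ℕ) : ℕ :=
  ((colLabelList ((D.filter (fun q => q.2 = p.2)).image Prod.fst)
      ((D.filter (fun q => p.2 < q.2)).image Prod.fst)).lookup p.1).getD 0

/-- Number of snowflakes of the modified snow diagram `snow-hat(D)`. -/
def sfhat (D : Finset (ℕ × ℕ)) : ℕ :=
  (((Finset.range (D.sup Prod.fst + 1)) ×ˢ (D.image Prod.snd)).filter
    (fun p => 1 ≤ p.1 ∧ p ∉ D ∧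
      ∃ q ∈ D, q.2 = p.2 ∧ p.1 < q.1 ∧ hatLabel D q ≤ p.1)).card

/-- Cells of `D` that are rightmost in their row. -/
def rmostCells (D : Finset (ℕ × ℕ)) : Finset (ℕ × ℕ) :=
  D.filter (fun p => ∀ q ∈ D, q.1 = p.1 → q.2 ≤ p.2)

/-- `S(D)`: cells that are not rightmost in their row and such that no cell
above them in their column is rightmost in its row. -/
def SofD (D : Finset (ℕ × ℕ)) : Finset (ℕ × ℕ) :=
  D.filter (fun p => p ∉ rmostCells D ∧
    ∀ q ∈ D, q.2 = p.2 → p.1 < q.1 → q ∉ rmostCells D)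

/-- Restriction of `D` to the columns in `C`. -/
def Res (D : Finset (ℕ × ℕ)) (C : Finset ℕ) : Finset (ℕ × ℕ) :=
  D.filter (fun p => p.2 ∈ C)

open Classical in
/-- The ghost move at row `r`, as a function (identity when no move is possible). -/
noncomputable def gmove (T : Diagram) (r : ℕ) : Diagram :=
  if h : ∃ p : ℕ × ℕ, KohnertMovable T r p.1 p.2 then
    applyGhost T r h.choose.1 h.choose.2
  else T

/-! ### Development: auxiliary machinery -/

namespace SkewAux

/-- Candidate columns for a dark cloud in row `r`, given already-marked cells `b`. -/
def dcand (D b : Finset (ℕ × ℕ)) (r : ℕ) : Finset ℕ :=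
  (D.filter (fun p => p.1 = r ∧ ∀ q ∈ b, q.2 ≠ p.2)).image Prod.snd

/-- One step of the dark-cloud computation. -/
def dstep (D b : Finset (ℕ × ℕ)) (r : ℕ) : Finset (ℕ × ℕ) :=
  if h : (dcand D b r).Nonempty then insert (r, (dcand D b r).max' h) b else b

/-- Accumulated dark-cloud computation processing rows `n-1, n-2, …, 0`. -/
def daccum (D : Finset (ℕ × ℕ)) : ℕ → Finset (ℕ × ℕ) → Finset (ℕ × ℕ)
  | 0, b => b
  | n + 1, b => daccum D n (dstep D b n)

lemma foldl_eq_daccum (D : Finset (ℕ × ℕ)) :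
    ∀ n b, ((List.range n).reverse).foldl (dstep D) b = daccum D n b := by
  intro n
  induction n with
  | zero => intro b; rfl
  | succ n ih =>
      intro b
      rw [List.range_succ, List.reverse_append]
      simpa [daccum] using ih (dstep D b n)

lemma dark_eq_daccum (D : Finset (ℕ × ℕ)) :
    dark D = daccum D (D.sup Prod.fst + 1) ∅ := by
  rw [← foldl_eq_daccum]
  rfl

/-- Invariant for the dark-cloud computation: `b` is the set of dark clouds
of rows `≥ n`. -/
structure DGood (D : Finset (ℕ × ℕ)) (n : ℕ) (b : Finset (ℕ × ℕ)) : Prop where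
  mem : ∀ q ∈ b, q ∈ D ∧ n ≤ q.1
  colU : ∀ q ∈ b, ∀ q' ∈ b, q.2 = q'.2 → q = q'
  rowU : ∀ q ∈ b, ∀ q' ∈ b, q.1 = q'.1 → q = q'
  above : ∀ q ∈ b, ∀ c, (q.1, c) ∈ D → q.2 < c → ∃ q' ∈ b, q'.2 = c ∧ q.1 < q'.1
  cover : ∀ r c, n ≤ r → (r, c) ∈ D →
      (∃ c', c ≤ c' ∧ (r, c') ∈ b) ∨ (∃ ρ, r < ρ ∧ (ρ, c) ∈ b)

lemma dgood_step (D : Finset (ℕ × ℕ)) (n : ℕ) (b : Finset (ℕ × ℕ))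
    (h : DGood D (n + 1) b) : DGood D n (dstep D b n) := by
  classical
  unfold dstep
  by_cases hne : (dcand D b n).Nonempty
  · simp only [dif_pos hne]
    set mx := (dcand D b n).max' hne with hmx
    have hmxmem : mx ∈ dcand D b n := (dcand D b n).max'_mem hne
    obtain ⟨p, hp, hpsnd⟩ := Finset.mem_image.mp hmxmem
    rw [Finset.mem_filter] at hp
    obtain ⟨hpD, hp1, hp2⟩ := hp
    have hmxD : (n, mx) ∈ D := by
      have : p = (n, mx) := by
        apply Prod.ext
        · exact hp1
        · exact hpsnd
      rwa [this] at hpD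
    have hmxnew : ∀ q ∈ b, q.2 ≠ mx := by
      intro q hq
      have := hp2 q hq
      rwa [hpsnd] at this
    -- membership in candidate set
    have hcandmem : ∀ c, (n, c) ∈ D → (∀ q ∈ b, q.2 ≠ c) → c ∈ dcand D b n := by
      intro c hc hall
      apply Finset.mem_image.mpr
      exact ⟨(n, c), Finset.mem_filter.mpr ⟨hc, rfl, hall⟩, rfl⟩
    constructor
    · intro q hq
      rcases Finset.mem_insert.mp hq with hq | hq
      · subst hq; exact ⟨hmxD, le_refl n⟩
      · exact ⟨(h.mem q hq).1, le_trans (Nat.le_succ n) (h.mem q hq).2⟩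
    · intro q hq q' hq'
      rcases Finset.mem_insert.mp hq with hq | hq <;>
        rcases Finset.mem_insert.mp hq' with hq' | hq'
      · subst hq; subst hq'; intro _; rfl
      · subst hq; intro hcol; exact absurd hcol.symm (hmxnew q' hq')
      · subst hq'; intro hcol; exact absurd hcol (hmxnew q hq)
      · exact h.colU q hq q' hq'
    · intro q hq q' hq'
      rcases Finset.mem_insert.mp hq with hq | hq <;>
        rcases Finset.mem_insert.mp hq' with hq' | hq'
      · subst hq; subst hq'; intro _; rfl
      · subst hq; intro hrow
        have := (h.mem q' hq').2
        simp only [← hrow] at this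
        omega
      · subst hq'; intro hrow
        have := (h.mem q hq).2
        simp only [hrow] at this
        omega
      · exact h.rowU q hq q' hq'
    · intro q hq c hc hlt
      rcases Finset.mem_insert.mp hq with hq | hq
      · subst hq
        simp only at hc hlt
        by_cases hcb : ∀ q' ∈ b, q'.2 ≠ c
        · exact absurd ((dcand D b n).le_max' c (hcandmem c hc hcb)) (by omega)
        · push_neg at hcb
          obtain ⟨q', hq', hq'c⟩ := hcb
          refine ⟨q', Finset.mem_insert_of_mem hq', hq'c, ?_⟩
          have := (h.mem q' hq').2
          omega
      · obtain ⟨q', hq', hq'c, hq'r⟩ := h.above q hq c hc hlt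
        exact ⟨q', Finset.mem_insert_of_mem hq', hq'c, hq'r⟩
    · intro r c hr hc
      rcases Nat.eq_or_lt_of_le hr with hr | hr
      · subst hr
        by_cases hcb : ∀ q' ∈ b, q'.2 ≠ c
        · left
          exact ⟨mx, (dcand D b n).le_max' c (hcandmem c hc hcb), Finset.mem_insert_self _ _⟩
        · push_neg at hcb
          obtain ⟨q', hq', hq'c⟩ := hcb
          right
          refine ⟨q'.1, ?_, ?_⟩
          · have := (h.mem q' hq').2; omega
          · have : q' = (q'.1, c) := by rw [← hq'c]
            rw [← this]; exact Finset.mem_insert_of_mem hq'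
      · rcases h.cover r c hr hc with ⟨c', hcc', hmem⟩ | ⟨ρ, hρ, hmem⟩
        · exact Or.inl ⟨c', hcc', Finset.mem_insert_of_mem hmem⟩
        · exact Or.inr ⟨ρ, hρ, Finset.mem_insert_of_mem hmem⟩
  · simp only [dif_neg hne]
    constructor
    · intro q hq; exact ⟨(h.mem q hq).1, le_trans (Nat.le_succ n) (h.mem q hq).2⟩
    · exact h.colU
    · exact h.rowU
    · exact h.above
    · intro r c hr hc
      rcases Nat.eq_or_lt_of_le hr with hr | hr
      · subst hr
        by_cases hcb : ∀ q' ∈ b, q'.2 ≠ c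
        · exact absurd ⟨c, Finset.mem_image.mpr ⟨(n, c),
            Finset.mem_filter.mpr ⟨hc, rfl, hcb⟩, rfl⟩⟩ hne
        · push_neg at hcb
          obtain ⟨q', hq', hq'c⟩ := hcb
          right
          refine ⟨q'.1, ?_, ?_⟩
          · have := (h.mem q' hq').2; omega
          · have : q' = (q'.1, c) := by rw [← hq'c]
            rw [← this]; exact hq'
      · exact h.cover r c hr hc

lemma dgood_daccum (D : Finset (ℕ × ℕ)) :
    ∀ n b, DGood D n b → DGood D 0 (daccum D n b) := by
  intro n
  induction n with
  | zero => intro b hb; exact hb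
  | succ n ih => intro b hb; exact ih (dstep D b n) (dgood_step D n b hb)

lemma dgood_init (D : Finset (ℕ × ℕ)) : DGood D (D.sup Prod.fst + 1) ∅ := by
  constructor <;> try (intro q hq; exact absurd hq (Finset.notMem_empty q))
  intro r c hr hc
  have : r ≤ D.sup Prod.fst := Finset.le_sup (f := Prod.fst) hc
  omega

lemma dark_good (D : Finset (ℕ × ℕ)) : DGood D 0 (dark D) := by
  rw [dark_eq_daccum]
  exact dgood_daccum D _ ∅ (dgood_init D)

lemma dark_mem_D {D : Finset (ℕ × ℕ)} {q : ℕ × ℕ} (h : q ∈ dark D) : q ∈ D :=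
  ((dark_good D).mem q h).1

lemma dark_colU {D : Finset (ℕ × ℕ)} {q q' : ℕ × ℕ} (h : q ∈ dark D) (h' : q' ∈ dark D)
    (hc : q.2 = q'.2) : q = q' := (dark_good D).colU q h q' h' hc

lemma dark_rowU {D : Finset (ℕ × ℕ)} {q q' : ℕ × ℕ} (h : q ∈ dark D) (h' : q' ∈ dark D)
    (hc : q.1 = q'.1) : q = q' := (dark_good D).rowU q h q' h' hc

lemma dark_row_le_sup {D : Finset (ℕ × ℕ)} {q : ℕ × ℕ} (h : q ∈ dark D) :
    q.1 ≤ D.sup Prod.fst := Finset.le_sup (f := Prod.fst) (dark_mem_D h)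

end SkewAux

namespace SkewAux

/-- The hole lemma: in a generalized skew diagram, a hole below an occupied
cell extends to the right. -/
lemma holeLemma {D : Finset (ℕ × ℕ)} (hD : IsGenSkew D) {s ρ c c' : ℕ}
    (hsρ : s < ρ) (hρ : (ρ, c) ∈ D) (hs : (s, c) ∉ D) (hcc : c ≤ c') :
    (s, c') ∉ D := by
  intro hmem
  obtain ⟨-, hcontig, -, hdown⟩ := hD
  obtain ⟨c₁, hc₁le, hc₁⟩ := hdown s ρ c hsρ hρ ⟨c', hmem⟩
  exact hs (hcontig s c₁ c c' hc₁ hmem hc₁le hcc)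

/-- Dark clouds of a generalized skew diagram have strictly increasing columns
in strictly increasing rows. -/
lemma dark_incr {D : Finset (ℕ × ℕ)} (hD : IsGenSkew D) {q q' : ℕ × ℕ}
    (h : q ∈ dark D) (h' : q' ∈ dark D) (hr : q.1 < q'.1) : q.2 < q'.2 := by
  by_contra hle
  push_neg at hle
  rcases Nat.eq_or_lt_of_le hle with heq | hlt
  · exact absurd (dark_colU h h' heq.symm) (by intro hqq; rw [hqq] at hr; omega)
  · -- q'.2 < q.2
    obtain ⟨-, hcontig, hup, -⟩ := hD
    have hqD : q ∈ D := dark_mem_D h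
    have hq'D : q' ∈ D := dark_mem_D h'
    obtain ⟨c₂, hc₂ge, hc₂⟩ := hup q.1 q'.1 q.2 hr (by simpa using hqD) ⟨q'.2, by simpa using hq'D⟩
    have hmem : (q'.1, q.2) ∈ D :=
      hcontig q'.1 q'.2 q.2 c₂ (by simpa using hq'D) hc₂ (le_of_lt hlt) hc₂ge
    obtain ⟨q'', hq'', hq''c, hq''r⟩ := (dark_good D).above q' h' q.2 hmem hlt
    have : q'' = q := dark_colU hq'' h hq''c
    rw [this] at hq''r
    omega

/-- Number of "holes" (current snowflake positions) below row `q.1` in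
column `q.2`, for a given diagram `T`. -/
def cnt (T : Diagram) (q : ℕ × ℕ) : ℕ :=
  ((Finset.range q.1).filter (fun s => 1 ≤ s ∧ (s, q.2) ∉ T.cells)).card

/-- The number of ghost moves still owed at stage `r`. -/
def NN (D : Finset (ℕ × ℕ)) (T : Diagram) (r : ℕ) : ℕ :=
  ∑ q ∈ (dark D).filter (fun q => r ≤ q.1), cnt T q

lemma sf_eq_sum (D : Finset (ℕ × ℕ)) :
    sf D = ∑ q ∈ dark D, cnt ⟨D, ∅⟩ q := by
  classical
  have hsnow : snowflakes D = (dark D).biUnion (fun q =>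
      ((Finset.range q.1).filter (fun s => 1 ≤ s ∧ (s, q.2) ∉ D)).image
        (fun s => (s, q.2))) := by
    ext p
    simp only [snowflakes, Finset.mem_filter, Finset.mem_product, Finset.mem_range,
      Finset.mem_biUnion, Finset.mem_image]
    constructor
    · rintro ⟨⟨-, -⟩, h1, hpD, q, hq, hqc, hqr⟩
      refine ⟨q, hq, p.1, ⟨hqr, h1, ?_⟩, ?_⟩
      · rw [hqc]; simpa using hpD
      · rw [hqc]
    · rintro ⟨q, hq, s, ⟨hsq, hs1, hsD⟩, hsp⟩
      subst hsp
      refine ⟨⟨?_, ⟨q, dark_mem_D hq, rfl⟩⟩, hs1, hsD, q, hq, rfl, hsq⟩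
      have := dark_row_le_sup hq
      simp only
      omega
  rw [sf, hsnow, Finset.card_biUnion]
  · apply Finset.sum_congr rfl
    intro q hq
    rw [Finset.card_image_of_injective]
    · rfl
    · intro a b hab
      simpa using hab
  · intro q hq q' hq' hne
    apply Finset.disjoint_left.mpr
    intro p hp hp'
    simp only [Finset.mem_image, Finset.mem_filter] at hp hp'
    obtain ⟨s, -, hs⟩ := hp
    obtain ⟨t, -, ht⟩ := hp'
    apply hne
    apply dark_colU hq hq'
    rw [← hs] at ht
    exact (congrArg Prod.snd ht).symm

/-- One legal plain Kohnert move gives a `KStep`. -/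
lemma kstep_plain {T : Diagram} {r c rhat : ℕ} (h : KohnertMovable T r c rhat) :
    KStep T (applyKohnert T r c rhat) := ⟨r, c, rhat, h, Or.inl rfl⟩

lemma kstep_ghost {T : Diagram} {r c rhat : ℕ} (h : KohnertMovable T r c rhat) :
    KStep T (applyGhost T r c rhat) := ⟨r, c, rhat, h, Or.inr rfl⟩

end SkewAux

namespace SkewAux

/-- Push a cell down its column to the lowest hole, by plain Kohnert moves. -/
lemma descend : ∀ t₀ : ℕ, ∀ (T : Diagram) (c m : ℕ),
    (t₀, c) ∈ T.cells → (∀ c', c < c' → (t₀, c') ∉ T.cells) →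
    (∀ s, (s, c) ∉ T.ghosts) →
    1 ≤ m → m < t₀ → (m, c) ∉ T.cells →
    (∀ s, 1 ≤ s → s < m → (s, c) ∈ T.cells) →
    (∀ s, m < s → s < t₀ → (s, c) ∉ T.cells → ∀ c', c < c' → (s, c') ∉ T.cells) →
    ∃ T' : Diagram, Relation.ReflTransGen KStep T T' ∧
      T'.ghosts = T.ghosts ∧
      T'.cells = insert (m, c) (T.cells.erase (t₀, c)) := by
  intro t₀
  induction t₀ using Nat.strong_induction_on with
  | _ t₀ ih =>
    intro T c m hcell hrm hng hm1 hmt hmhole hmin hclean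
    classical
    set S := (Finset.range t₀).filter (fun s => m ≤ s ∧ (s, c) ∉ T.cells) with hS
    have hmS : m ∈ S := Finset.mem_filter.mpr ⟨Finset.mem_range.mpr hmt, le_refl m, hmhole⟩
    have hSne : S.Nonempty := ⟨m, hmS⟩
    set t₁ := S.max' hSne with ht₁
    have ht₁S : t₁ ∈ S := S.max'_mem hSne
    rw [hS, Finset.mem_filter, Finset.mem_range] at ht₁S
    obtain ⟨ht₁t₀, hmt₁, ht₁hole⟩ := ht₁S
    have ht₁1 : 1 ≤ t₁ := le_trans hm1 hmt₁
    have hinterm : ∀ s, t₁ < s → s < t₀ → (s, c) ∈ T.cells := by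
      intro s hs1 hs2
      by_contra hno
      have : s ∈ S := Finset.mem_filter.mpr
        ⟨Finset.mem_range.mpr hs2, le_trans hmt₁ (le_of_lt hs1), hno⟩
      exact absurd (S.le_max' s this) (by omega)
    have hmov : KohnertMovable T t₀ c t₁ :=
      ⟨⟨hcell, fun c' hc' => hrm c' hc'⟩, hng t₀, ht₁1, ht₁t₀, ht₁hole,
        fun r' h1 h2 => ⟨hinterm r' h1 h2, hng r'⟩⟩
    set T₁ := applyKohnert T t₀ c t₁ with hT₁
    have hstep : KStep T T₁ := kstep_plain hmov
    have hT₁cells : T₁.cells = insert (t₁, c) (T.cells.erase (t₀, c)) := rfl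
    have hT₁gh : T₁.ghosts = T.ghosts := rfl
    by_cases heq : t₁ = m
    · refine ⟨T₁, Relation.ReflTransGen.single hstep, hT₁gh, ?_⟩
      rw [hT₁cells, heq]
    · have hmltt₁ : m < t₁ := lt_of_le_of_ne hmt₁ (fun h => heq h.symm)
      have hrec := ih t₁ ht₁t₀ T₁ c m
        (by rw [hT₁cells]; exact Finset.mem_insert_self _ _)
        (by
          intro c' hc'
          rw [hT₁cells]
          intro hmem
          rcases Finset.mem_insert.mp hmem with h | h
          · exact absurd (congrArg Prod.snd h) (by simp; omega)
          · exact hclean t₁ hmltt₁ ht₁t₀ ht₁hole c' hc' (Finset.mem_of_mem_erase h))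
        (by intro s; rw [hT₁gh]; exact hng s)
        hm1 hmltt₁
        (by
          rw [hT₁cells]
          intro hmem
          rcases Finset.mem_insert.mp hmem with h | h
          · exact absurd (congrArg Prod.fst h) (by simp; omega)
          · exact hmhole (Finset.mem_of_mem_erase h))
        (by
          intro s hs1 hs2
          rw [hT₁cells]
          apply Finset.mem_insert_of_mem
          apply Finset.mem_erase.mpr
          exact ⟨by simp; omega, hmin s hs1 hs2⟩)
        (by
          intro s hs1 hs2 hhole c' hc'
          have hsc : (s, c) ∉ T.cells := by
            intro hmem
            apply hhole
            rw [hT₁cells]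
            apply Finset.mem_insert_of_mem
            exact Finset.mem_erase.mpr ⟨by simp; omega, hmem⟩
          have := hclean s hs1 (lt_trans hs2 ht₁t₀) hsc c' hc'
          rw [hT₁cells]
          intro hmem
          rcases Finset.mem_insert.mp hmem with h | h
          · exact absurd (congrArg Prod.snd h) (by simp; omega)
          · exact this (Finset.mem_of_mem_erase h))
      obtain ⟨T', hreach, hgh, hcells⟩ := hrec
      refine ⟨T', Relation.ReflTransGen.head hstep hreach, by rw [hgh, hT₁gh], ?_⟩
      rw [hcells, hT₁cells]
      congr 1
      rw [Finset.erase_insert]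
      intro hmem
      exact ht₁hole (Finset.mem_of_mem_erase hmem)

/-- Drop a cell down its column through all the holes below it, by ghost moves. -/
lemma ghostDescend : ∀ n : ℕ, ∀ (T : Diagram) (t₀ c : ℕ) (H : Finset ℕ),
    H.card = n →
    (t₀, c) ∈ T.cells → (∀ c', c < c' → (t₀, c') ∉ T.cells) →
    (∀ s, s ≤ t₀ → (s, c) ∉ T.ghosts) →
    (∀ s, s ∈ H ↔ 1 ≤ s ∧ s < t₀ ∧ (s, c) ∉ T.cells) →
    ∀ hne : H.Nonempty,
    (∀ s ∈ H, s ≠ H.min' hne → ∀ c', c < c' → (s, c') ∉ T.cells) →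
    ∃ T' : Diagram, Relation.ReflTransGen KStep T T' ∧
      T'.cells = T.cells ∪ H.image (fun s => (s, c)) ∧
      T'.ghosts = T.ghosts ∪ (insert t₀ (H.erase (H.min' hne))).image (fun s => (s, c)) ∧
      T'.ghosts.card = T.ghosts.card + H.card := by
  intro n
  induction n with
  | zero =>
    intro T t₀ c H hcard _ _ _ _ hne _
    exact absurd (Finset.card_eq_zero.mp hcard) (Finset.nonempty_iff_ne_empty.mp hne)
  | succ n ih =>
    intro T t₀ c H hcard hcell hrm hng hH hne hclean
    classical
    set s₁ := H.max' hne with hs₁def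
    have hs₁H : s₁ ∈ H := H.max'_mem hne
    obtain ⟨hs₁1, hs₁t₀, hs₁hole⟩ := (hH s₁).mp hs₁H
    have hinterm : ∀ s, s₁ < s → s < t₀ → (s, c) ∈ T.cells := by
      intro s h1 h2
      by_contra hno
      have : s ∈ H := (hH s).mpr ⟨by omega, h2, hno⟩
      exact absurd (H.le_max' s this) (by omega)
    have hmov : KohnertMovable T t₀ c s₁ :=
      ⟨⟨hcell, fun c' hc' => hrm c' hc'⟩, hng t₀ (le_refl _), hs₁1, hs₁t₀, hs₁hole,
        fun r' h1 h2 => ⟨hinterm r' h1 h2, hng r' (le_of_lt h2)⟩⟩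
    set T₁ := applyGhost T t₀ c s₁ with hT₁def
    have hstep : KStep T T₁ := kstep_ghost hmov
    have hT₁cells : T₁.cells = insert (s₁, c) T.cells := rfl
    have hT₁gh : T₁.ghosts = insert (t₀, c) T.ghosts := rfl
    have hT₁card : T₁.ghosts.card = T.ghosts.card + 1 := by
      rw [hT₁gh, Finset.card_insert_of_notMem (hng t₀ (le_refl _))]
    set H' := H.erase s₁ with hH'def
    have hH'card : H'.card = n := by
      rw [hH'def, Finset.card_erase_of_mem hs₁H, hcard]
      omega
    by_cases hn0 : n = 0
    · -- H = {s₁}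
      have huniq : ∀ x ∈ H, x = s₁ := by
        intro x hx
        by_contra hxne
        have : x ∈ H' := Finset.mem_erase.mpr ⟨hxne, hx⟩
        rw [Finset.card_eq_zero.mp (by omega : H'.card = 0)] at this
        exact absurd this (Finset.notMem_empty x)
      have hHsing : H = {s₁} :=
        Finset.eq_singleton_iff_unique_mem.mpr ⟨hs₁H, huniq⟩
      have hmin : H.min' hne = s₁ := huniq _ (H.min'_mem hne)
      refine ⟨T₁, Relation.ReflTransGen.single hstep, ?_, ?_, by omega⟩
      · rw [hT₁cells, hHsing]
        ext p
        simp only [Finset.mem_union, Finset.mem_insert, Finset.image_singleton,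
          Finset.mem_singleton]
        tauto
      · rw [hT₁gh, hmin, hHsing]
        simp only [Finset.erase_singleton, Finset.image_insert, Finset.image_empty]
        ext p
        simp only [Finset.mem_union, Finset.mem_insert, Finset.notMem_empty]
        tauto
    · have hH'ne : H'.Nonempty := Finset.card_pos.mp (by omega)
      have hcard2 : 1 < H.card := by omega
      have hminmax : H.min' hne < H.max' hne := Finset.min'_lt_max'_of_card H hcard2
      have hminH' : H.min' hne ∈ H' :=
        Finset.mem_erase.mpr ⟨by omega, H.min'_mem hne⟩
      have hmineq : H'.min' hH'ne = H.min' hne := by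
        apply le_antisymm
        · exact Finset.min'_le H' _ hminH'
        · exact Finset.min'_le H _ (Finset.mem_of_mem_erase (H'.min'_mem hH'ne))
      have hrec := ih T₁ s₁ c H' hH'card
        (by rw [hT₁cells]; exact Finset.mem_insert_self _ _)
        (by
          intro c' hc'
          rw [hT₁cells]
          intro hmem
          rcases Finset.mem_insert.mp hmem with h | h
          · exact absurd (congrArg Prod.snd h) (by simp; omega)
          · exact hclean s₁ hs₁H (by omega) c' hc' h)
        (by
          intro s hs
          rw [hT₁gh]
          intro hmem
          rcases Finset.mem_insert.mp hmem with h | h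
          · exact absurd (congrArg Prod.fst h) (by simp; omega)
          · exact hng s (by omega) h)
        (by
          intro s
          rw [hT₁cells]
          constructor
          · intro hs
            rw [hH'def, Finset.mem_erase] at hs
            obtain ⟨hsne, hsH⟩ := hs
            obtain ⟨h1, h2, h3⟩ := (hH s).mp hsH
            have : s < s₁ := lt_of_le_of_ne (H.le_max' s hsH) hsne
            refine ⟨h1, this, ?_⟩
            intro hmem
            rcases Finset.mem_insert.mp hmem with h | h
            · exact absurd (congrArg Prod.fst h) (by simp; omega)
            · exact h3 h
          · rintro ⟨h1, h2, h3⟩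
            have h3' : (s, c) ∉ T.cells := fun hmem => h3 (Finset.mem_insert_of_mem hmem)
            have : s ∈ H := (hH s).mpr ⟨h1, by omega, h3'⟩
            exact Finset.mem_erase.mpr ⟨by omega, this⟩)
        hH'ne
        (by
          intro s hs hsne c' hc'
          rw [hmineq] at hsne
          rw [hT₁cells]
          intro hmem
          rcases Finset.mem_insert.mp hmem with h | h
          · exact absurd (congrArg Prod.snd h) (by simp; omega)
          · exact hclean s (Finset.mem_of_mem_erase hs) hsne c' hc' h)
      obtain ⟨T', hreach, hcells, hgh, hcardT'⟩ := hrec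
      have hHins : H = insert s₁ H' := (Finset.insert_erase hs₁H).symm
      have herase : H.erase (H.min' hne) = insert s₁ (H'.erase (H.min' hne)) := by
        rw [hH'def]
        ext x
        simp only [Finset.mem_insert, Finset.mem_erase]
        constructor
        · rintro ⟨hxm, hxH⟩
          by_cases hx : x = s₁
          · exact Or.inl hx
          · exact Or.inr ⟨hxm, hx, hxH⟩
        · rintro (hx | ⟨hxm, hxs, hxH⟩)
          · subst hx; exact ⟨by omega, hs₁H⟩
          · exact ⟨hxm, hxH⟩
      refine ⟨T', Relation.ReflTransGen.head hstep hreach, ?_, ?_, ?_⟩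
      · rw [hcells, hT₁cells, hHins]
        simp only [Finset.image_insert]
        ext p
        simp only [Finset.mem_union, Finset.mem_insert]
        tauto
      · rw [hgh, hT₁gh, hmineq, herase]
        simp only [Finset.image_insert]
        ext p
        simp only [Finset.mem_union, Finset.mem_insert]
        tauto
      · omega

end SkewAux

namespace SkewAux

/-- The main invariant carried while processing rows from bottom to top. -/
structure Inv (D : Finset (ℕ × ℕ)) (T : Diagram) (r : ℕ) : Prop where
  agree : ∀ p : ℕ × ℕ, r ≤ p.1 → ((p ∈ T.cells) ↔ p ∈ D)
  gsub : T.ghosts ⊆ T.cells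
  glow : ∀ g ∈ T.ghosts, g.1 < r
  gcol : ∀ g ∈ T.ghosts, ∃ ρ, (ρ, g.2) ∈ dark D ∧ ρ < r
  W : ∀ ρ c, (ρ, c) ∈ dark D → r ≤ ρ → ∀ s, 1 ≤ s → s < r → (s, c) ∉ T.cells →
      (∃ s', 1 ≤ s' ∧ s' < s ∧ (s', c) ∉ T.cells) → ∀ c', c < c' → (s, c') ∉ T.cells
  Mi : ∀ ρ c ρ' c', (ρ, c) ∈ dark D → (ρ', c') ∈ dark D → r ≤ ρ → r ≤ ρ' → c < c' →
      ∀ s, 1 ≤ s → s < ρ → (s, c) ∉ T.cells →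
      ∃ s', 1 ≤ s' ∧ s' ≤ s ∧ (s', c') ∉ T.cells

/-- In the region at or above `r`, holes extend rightwards (no invariant needed). -/
lemma Wup {D : Finset (ℕ × ℕ)} (hD : IsGenSkew D) {T : Diagram} {r : ℕ}
    (hI : Inv D T r) {ρ c s c' : ℕ} (hρ : (ρ, c) ∈ D) (hrs : r ≤ s) (hsρ : s < ρ)
    (hole : (s, c) ∉ T.cells) (hcc : c ≤ c') : (s, c') ∉ T.cells := by
  have hsD : (s, c) ∉ D := fun h => hole ((hI.agree (s, c) hrs).mpr h)
  have := holeLemma hD hsρ hρ hsD hcc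
  exact fun h => this ((hI.agree (s, c') hrs).mp h)

/-- A tail cell's column has a dark cloud strictly above row `r`. -/
lemma tailDark {D : Finset (ℕ × ℕ)} {r d c : ℕ} (hd : (r, d) ∈ dark D)
    (hc : (r, c) ∈ D) (hdc : d < c) : ∃ ρ, r < ρ ∧ (ρ, c) ∈ dark D := by
  rcases (dark_good D).cover r c (Nat.zero_le r) hc with ⟨c', hcc', hmem⟩ | h
  · have : (r, c') = (r, d) := dark_rowU hmem hd rfl
    have : c' = d := congrArg Prod.snd this
    omega
  · exact h

lemma dark_pos {D : Finset (ℕ × ℕ)} (hD : IsGenSkew D) {ρ c : ℕ}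
    (h : (ρ, c) ∈ dark D) : 1 ≤ ρ ∧ 1 ≤ c := hD.1 _ (dark_mem_D h)

end SkewAux

namespace SkewAux

set_option maxHeartbeats 1000000 in
/-- Clear the tail of row `r` (all cells strictly right of the dark column `d`)
by plain Kohnert moves, pushing each cell to the bottom hole of its column. -/
lemma clearTail {D : Finset (ℕ × ℕ)} (hD : IsGenSkew D) {T₀ : Diagram} {r d : ℕ}
    (hI : Inv D T₀ r) (hd : (r, d) ∈ dark D)
    (hne : ∃ s0, 1 ≤ s0 ∧ s0 < r ∧ (s0, d) ∉ T₀.cells) :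
    ∀ k : ℕ, ∀ T : Diagram,
    (T.cells.filter (fun p => p.1 = r ∧ d < p.2)).card = k →
    T.ghosts = T₀.ghosts →
    (∀ p : ℕ × ℕ, r < p.1 → ((p ∈ T.cells) ↔ p ∈ T₀.cells)) →
    (∀ c, c ≤ d → (((r, c) ∈ T.cells) ↔ (r, c) ∈ T₀.cells)) →
    (∀ c, (r, c) ∈ T.cells → (r, c) ∈ T₀.cells) →
    (∀ c, d < c → (r, c) ∈ T₀.cells → (r, c) ∉ T.cells →
      ∃ m, 1 ≤ m ∧ m < r ∧ (m, c) ∉ T₀.cells ∧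
        (∀ s, 1 ≤ s → s < m → (s, c) ∈ T₀.cells) ∧
        (∀ s, s < r → (((s, c) ∈ T.cells) ↔ ((s, c) ∈ T₀.cells ∨ s = m)))) →
    (∀ c, ¬(d < c ∧ (r, c) ∈ T₀.cells ∧ (r, c) ∉ T.cells) → ∀ s, s < r →
      (((s, c) ∈ T.cells) ↔ (s, c) ∈ T₀.cells)) →
    ∃ T' : Diagram,
      Relation.ReflTransGen KStep T T' ∧
      T'.ghosts = T₀.ghosts ∧
      (∀ p : ℕ × ℕ, r < p.1 → ((p ∈ T'.cells) ↔ p ∈ T₀.cells)) ∧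
      (∀ c, c ≤ d → (((r, c) ∈ T'.cells) ↔ (r, c) ∈ T₀.cells)) ∧
      (∀ c, d < c → (r, c) ∉ T'.cells) ∧
      (∀ c, d < c → (r, c) ∈ T₀.cells →
        ∃ m, 1 ≤ m ∧ m < r ∧ (m, c) ∉ T₀.cells ∧
          (∀ s, 1 ≤ s → s < m → (s, c) ∈ T₀.cells) ∧
          (∀ s, s < r → (((s, c) ∈ T'.cells) ↔ ((s, c) ∈ T₀.cells ∨ s = m)))) ∧
      (∀ c, (d < c → (r, c) ∉ T₀.cells) → ∀ s, s < r →
        (((s, c) ∈ T'.cells) ↔ (s, c) ∈ T₀.cells)) := by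
  intro k
  induction k with
  | zero =>
    intro T hcard hgh hup hlow hrowsub hclr hunt
    have htail : ∀ c, d < c → (r, c) ∉ T.cells := by
      intro c hc hmem
      have hmem' : (r, c) ∈ T.cells.filter (fun p => p.1 = r ∧ d < p.2) :=
        Finset.mem_filter.mpr ⟨hmem, rfl, hc⟩
      rw [Finset.card_eq_zero.mp hcard] at hmem'
      exact absurd hmem' (Finset.notMem_empty _)
    refine ⟨T, Relation.ReflTransGen.refl, hgh, hup, hlow, htail, ?_, ?_⟩
    · intro c hc hcT₀
      exact hclr c hc hcT₀ (htail c hc)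
    · intro c hc s hs
      apply hunt c _ s hs
      rintro ⟨h1, h2, -⟩
      exact (hc h1) h2
  | succ k ih =>
    intro T hcard hgh hup hlow hrowsub hclr hunt
    classical
    set S := T.cells.filter (fun p => p.1 = r ∧ d < p.2) with hS
    have hSne : S.Nonempty := Finset.card_pos.mp (by omega)
    set γ := (S.image Prod.snd).max' (hSne.image _) with hγdef
    have hγmem : γ ∈ S.image Prod.snd := Finset.max'_mem _ _
    obtain ⟨p, hpS, hpγ⟩ := Finset.mem_image.mp hγmem
    have hpr : p.1 = r := (Finset.mem_filter.mp hpS).2.1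
    have hdγ : d < γ := by rw [← hpγ]; exact (Finset.mem_filter.mp hpS).2.2
    have hγT : (r, γ) ∈ T.cells := by
      have hmem := (Finset.mem_filter.mp hpS).1
      have hp : p = (r, γ) := Prod.ext hpr hpγ
      rwa [hp] at hmem
    have hγT₀ : (r, γ) ∈ T₀.cells := hrowsub γ hγT
    have hγD : (r, γ) ∈ D := (hI.agree (r, γ) (le_refl r)).mp hγT₀
    obtain ⟨ργ, hrργ, hγdark⟩ := tailDark hd hγD hdγ
    -- rightmost
    have hrm : ∀ c', γ < c' → (r, c') ∉ T.cells := by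
      intro c' hc' hmem
      have hc'd : d < c' := lt_trans hdγ hc'
      have : c' ∈ S.image Prod.snd :=
        Finset.mem_image.mpr ⟨(r, c'), Finset.mem_filter.mpr ⟨hmem, rfl, hc'd⟩, rfl⟩
      exact absurd (Finset.le_max' _ c' this) (by omega)
    -- untouched column γ
    have hγunt : ∀ s, s < r → (((s, γ) ∈ T.cells) ↔ (s, γ) ∈ T₀.cells) := by
      intro s hs
      apply hunt γ _ s hs
      rintro ⟨-, -, h3⟩
      exact h3 hγT
    -- a hole below r in column γ
    obtain ⟨s0, hs01, hs0r, hs0hole⟩ := hne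
    obtain ⟨m0, hm01, hm0le, hm0hole⟩ :=
      hI.Mi r d ργ γ hd hγdark (le_refl r) (le_of_lt hrργ) hdγ s0 hs01 hs0r hs0hole
    set Hγ := (Finset.range r).filter (fun s => 1 ≤ s ∧ (s, γ) ∉ T₀.cells) with hHγ
    have hm0mem : m0 ∈ Hγ :=
      Finset.mem_filter.mpr ⟨Finset.mem_range.mpr (by omega), hm01, hm0hole⟩
    have hHγne : Hγ.Nonempty := ⟨m0, hm0mem⟩
    set m := Hγ.min' hHγne with hmdef
    have hmmem : m ∈ Hγ := Hγ.min'_mem hHγne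
    have hmr : m < r := Finset.mem_range.mp (Finset.mem_filter.mp hmmem).1
    have hm1 : 1 ≤ m := (Finset.mem_filter.mp hmmem).2.1
    have hmhole₀ : (m, γ) ∉ T₀.cells := (Finset.mem_filter.mp hmmem).2.2
    have hminlty : ∀ s, 1 ≤ s → s < m → (s, γ) ∈ T₀.cells := by
      intro s hs1 hsm
      by_contra hno
      have : s ∈ Hγ := Finset.mem_filter.mpr
        ⟨Finset.mem_range.mpr (by omega), hs1, hno⟩
      exact absurd (Hγ.min'_le s this) (by omega)
    -- no ghosts in column γ
    have hngγ : ∀ s, (s, γ) ∉ T.ghosts := by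
      intro s hmem
      rw [hgh] at hmem
      obtain ⟨ρ₂, hρ₂dark, hρ₂r⟩ := hI.gcol _ hmem
      have : (ρ₂, γ) = (ργ, γ) := dark_colU hρ₂dark hγdark rfl
      have : ρ₂ = ργ := congrArg Prod.fst this
      omega
    -- cleanliness of non-minimal holes of γ
    have hclean : ∀ s, m < s → s < r → (s, γ) ∉ T.cells →
        ∀ c', γ < c' → (s, c') ∉ T.cells := by
      intro s hms hsr hsT c' hc' hmem
      have hs1 : 1 ≤ s := by omega
      have hsT₀ : (s, γ) ∉ T₀.cells := fun h => hsT ((hγunt s hsr).mpr h)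
      have hWs : ∀ c'', γ < c'' → (s, c'') ∉ T₀.cells :=
        hI.W ργ γ hγdark (le_of_lt hrργ) s hs1 hsr hsT₀ ⟨m, hm1, hms, hmhole₀⟩
      by_cases hcl : (r, c') ∈ T₀.cells ∧ (r, c') ∉ T.cells
      · -- column c' has been cleared
        have hdc' : d < c' := by omega
        obtain ⟨m', hm'1, hm'r, hm'hole, hm'min, hm'desc⟩ :=
          hclr c' hdc' hcl.1 hcl.2
        have hc'D : (r, c') ∈ D := (hI.agree (r, c') (le_refl r)).mp hcl.1
        obtain ⟨ρ', hrρ', hρ'dark⟩ := tailDark hd hc'D hdc'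
        rcases (hm'desc s hsr).mp hmem with h | h
        · exact hWs c' hc' h
        · -- s = m' : impossible since m' ≤ m < s
          obtain ⟨s₃, hs₃1, hs₃m, hs₃hole⟩ :=
            hI.Mi ργ γ ρ' c' hγdark hρ'dark (le_of_lt hrργ) (le_of_lt hrρ') hc'
              m hm1 (by omega) hmhole₀
          have : ¬ s₃ < m' := fun hlt => hs₃hole (hm'min s₃ hs₃1 hlt)
          omega
      · -- column c' untouched
        have := (hunt c' (by
          rintro ⟨h1, h2, h3⟩
          exact hcl ⟨h2, h3⟩) s hsr).mp hmem
        exact hWs c' hc' this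
    obtain ⟨T₁, hreach₁, hgh₁, hcells₁⟩ :=
      descend r T γ m hγT hrm hngγ hm1 hmr
        (fun h => hmhole₀ ((hγunt m hmr).mp h))
        (fun s hs1 hsm => (hγunt s (by omega)).mpr (hminlty s hs1 hsm))
        hclean
    have hT₁mem : ∀ q : ℕ × ℕ, q ∈ T₁.cells ↔ (q = (m, γ) ∨ (q ≠ (r, γ) ∧ q ∈ T.cells)) := by
      intro q
      rw [hcells₁]
      simp [Finset.mem_insert, Finset.mem_erase]
    -- recursion
    have hrec := ih T₁
      (by
        have hSeq : T₁.cells.filter (fun p => p.1 = r ∧ d < p.2) = S.erase (r, γ) := by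
          ext q
          rw [Finset.mem_filter, hT₁mem q, Finset.mem_erase, hS, Finset.mem_filter]
          constructor
          · rintro ⟨hq | ⟨hqne, hqT⟩, hq1, hq2⟩
            · rw [hq] at hq1; simp at hq1; omega
            · exact ⟨hqne, hqT, hq1, hq2⟩
          · rintro ⟨hqne, hqT, hq1, hq2⟩
            exact ⟨Or.inr ⟨hqne, hqT⟩, hq1, hq2⟩
        rw [hSeq, Finset.card_erase_of_mem (Finset.mem_filter.mpr ⟨hγT, rfl, hdγ⟩), ← hS,
          hcard]
        omega)
      (by rw [hgh₁, hgh])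
      (by
        intro q hq
        rw [hT₁mem q]
        constructor
        · rintro (h | ⟨-, h⟩)
          · rw [h] at hq; simp at hq; omega
          · exact (hup q hq).mp h
        · intro h
          refine Or.inr ⟨?_, (hup q hq).mpr h⟩
          intro hqe
          rw [hqe] at hq
          exact absurd hq (by simp))
      (by
        intro c hc
        rw [hT₁mem]
        constructor
        · rintro (h | ⟨-, h⟩)
          · exact absurd (congrArg Prod.fst h) (by simp; omega)
          · exact (hlow c hc).mp h
        · intro h
          refine Or.inr ⟨?_, (hlow c hc).mpr h⟩
          intro hqe
          have := congrArg Prod.snd hqe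
          simp at this
          omega)
      (by
        intro c hmem
        rw [hT₁mem] at hmem
        rcases hmem with h | ⟨-, h⟩
        · exact absurd (congrArg Prod.fst h) (by simp; omega)
        · exact hrowsub c h)
      (by
        intro c hc hcT₀ hcT₁
        by_cases hcγ : c = γ
        · subst hcγ
          refine ⟨m, hm1, hmr, hmhole₀, hminlty, ?_⟩
          intro s hs
          rw [hT₁mem]
          constructor
          · rintro (h | ⟨-, h⟩)
            · right; exact (congrArg Prod.fst h)
            · left; exact (hγunt s hs).mp h
          · rintro (h | h)
            · exact Or.inr ⟨by intro he; have := congrArg Prod.fst he; simp at this; omega,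
                (hγunt s hs).mpr h⟩
            · subst h; exact Or.inl rfl
        · have hcT : (r, c) ∉ T.cells := by
            intro h
            exact hcT₁ ((hT₁mem (r, c)).mpr (Or.inr ⟨by
              intro he; exact hcγ (congrArg Prod.snd he), h⟩))
          obtain ⟨m', hm'1, hm'r, hm'hole, hm'min, hm'desc⟩ := hclr c hc hcT₀ hcT
          refine ⟨m', hm'1, hm'r, hm'hole, hm'min, ?_⟩
          intro s hs
          rw [hT₁mem]
          constructor
          · rintro (h | ⟨-, h⟩)
            · exact absurd (congrArg Prod.snd h) (by simp; omega)
            · exact (hm'desc s hs).mp h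
          · intro h
            exact Or.inr ⟨by intro he; exact hcγ (congrArg Prod.snd he),
              (hm'desc s hs).mpr h⟩)
      (by
        intro c hcond s hs
        by_cases hcγ : c = γ
        · exfalso
          subst hcγ
          apply hcond
          refine ⟨hdγ, hγT₀, ?_⟩
          rw [hT₁mem]
          rintro (h | ⟨hne', -⟩)
          · exact absurd (congrArg Prod.fst h) (by simp; omega)
          · exact hne' rfl
        · have hrc : ((r, c) ∈ T₁.cells) ↔ (r, c) ∈ T.cells := by
            rw [hT₁mem]
            constructor
            · rintro (h | ⟨-, h⟩)
              · exact absurd (congrArg Prod.fst h) (by simp; omega)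
              · exact h
            · intro h
              exact Or.inr ⟨by intro he; exact hcγ (congrArg Prod.snd he), h⟩
          have huntc := hunt c (by
            rintro ⟨h1, h2, h3⟩
            exact hcond ⟨h1, h2, fun hmem => h3 (hrc.mp hmem)⟩) s hs
          rw [hT₁mem]
          constructor
          · rintro (h | ⟨-, h⟩)
            · exact absurd (congrArg Prod.snd h) (by simp; omega)
            · exact huntc.mp h
          · intro h
            exact Or.inr ⟨by
              intro he
              exact hcγ (congrArg Prod.snd he), huntc.mpr h⟩)
    obtain ⟨T', hreach', hgh', hup', hlow', htail', hclr', hunt'⟩ := hrec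
    exact ⟨T', Relation.ReflTransGen.trans hreach₁ hreach', hgh', hup', hlow', htail',
      hclr', hunt'⟩

end SkewAux

namespace SkewAux

lemma inv_succ {D : Finset (ℕ × ℕ)} (hD : IsGenSkew D) {T : Diagram} {r : ℕ}
    (hI : Inv D T r) : Inv D T (r + 1) := by
  refine ⟨fun p hp => hI.agree p (by omega), hI.gsub,
    fun g hg => by have := hI.glow g hg; omega,
    fun g hg => by obtain ⟨ρ, h1, h2⟩ := hI.gcol g hg; exact ⟨ρ, h1, by omega⟩,
    ?_, ?_⟩
  · intro ρ c hdk hρ s hs1 hsr hole hnm c' hcc'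
    rcases Nat.lt_or_ge s r with h | h
    · exact hI.W ρ c hdk (by omega) s hs1 h hole hnm c' hcc'
    · exact Wup hD hI (dark_mem_D hdk) h (by omega) hole (le_of_lt hcc')
  · intro ρ c ρ' c' hdk hdk' hρ hρ' hcc' s hs1 hsρ hole
    rcases Nat.lt_or_ge s r with h | h
    · exact hI.Mi ρ c ρ' c' hdk hdk' (by omega) (by omega) hcc' s hs1 hsρ hole
    · exact ⟨s, hs1, le_refl s,
        Wup hD hI (dark_mem_D hdk) h hsρ hole (le_of_lt hcc')⟩

lemma filter_dark_succ_of_none {D : Finset (ℕ × ℕ)} {r : ℕ}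
    (hnd : ∀ c, (r, c) ∉ dark D) :
    (dark D).filter (fun q => r ≤ q.1) = (dark D).filter (fun q => r + 1 ≤ q.1) := by
  ext q
  simp only [Finset.mem_filter]
  constructor
  · rintro ⟨hq, hr⟩
    refine ⟨hq, ?_⟩
    rcases Nat.eq_or_lt_of_le hr with h | h
    · exfalso
      have : q = (r, q.2) := Prod.ext h.symm rfl
      rw [this] at hq
      exact hnd q.2 hq
    · omega
  · rintro ⟨hq, hr⟩
    exact ⟨hq, by omega⟩

lemma filter_dark_succ_of_some {D : Finset (ℕ × ℕ)} {r d : ℕ}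
    (hd : (r, d) ∈ dark D) :
    (dark D).filter (fun q => r ≤ q.1) =
      insert (r, d) ((dark D).filter (fun q => r + 1 ≤ q.1)) := by
  ext q
  simp only [Finset.mem_filter, Finset.mem_insert]
  constructor
  · rintro ⟨hq, hr⟩
    rcases Nat.eq_or_lt_of_le hr with h | h
    · left
      exact dark_rowU hq hd h.symm
    · right; exact ⟨hq, by omega⟩
  · rintro (h | ⟨hq, hr⟩)
    · subst h; exact ⟨hd, le_refl r⟩
    · exact ⟨hq, by omega⟩

lemma NN_succ_of_some {D : Finset (ℕ × ℕ)} {T : Diagram} {r d : ℕ}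
    (hd : (r, d) ∈ dark D) :
    NN D T r = cnt T (r, d) + NN D T (r + 1) := by
  rw [NN, filter_dark_succ_of_some hd, Finset.sum_insert (by simp), NN]

end SkewAux

namespace SkewAux

set_option maxHeartbeats 4000000 in
/-- Processing one row: from stage `r` to stage `r+1`. -/
lemma round {D : Finset (ℕ × ℕ)} (hD : IsGenSkew D) {T : Diagram} {r : ℕ}
    (hI : Inv D T r) :
    ∃ (T' : Diagram) (h : ℕ),
      Relation.ReflTransGen KStep T T' ∧ Inv D T' (r + 1) ∧
      T'.ghosts.card = T.ghosts.card + h ∧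
      NN D T r = h + NN D T' (r + 1) := by
  classical
  by_cases hex : ∃ d, (r, d) ∈ dark D
  case neg =>
    push_neg at hex
    refine ⟨T, 0, Relation.ReflTransGen.refl, inv_succ hD hI, by omega, ?_⟩
    rw [NN, NN, filter_dark_succ_of_none hex]
    omega
  case pos =>
  obtain ⟨d, hd⟩ := hex
  have hd_D : (r, d) ∈ D := dark_mem_D hd
  have hr1 : 1 ≤ r := (hD.1 _ hd_D).1
  set Holes := (Finset.range r).filter (fun s => 1 ≤ s ∧ (s, d) ∉ T.cells) with hHolesdef
  have hcntT : cnt T (r, d) = Holes.card := rfl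
  by_cases hHne : Holes.Nonempty
  case neg =>
    refine ⟨T, 0, Relation.ReflTransGen.refl, inv_succ hD hI, by omega, ?_⟩
    rw [NN_succ_of_some (T := T) hd, hcntT,
      Finset.card_eq_zero.mpr (Finset.not_nonempty_iff_eq_empty.mp hHne)]
  case pos =>
  -- Step 1: clear the tail of row r.
  obtain ⟨z, hz⟩ := hHne
  rw [hHolesdef, Finset.mem_filter, Finset.mem_range] at hz
  have hne0 : ∃ s0, 1 ≤ s0 ∧ s0 < r ∧ (s0, d) ∉ T.cells := ⟨z, hz.2.1, hz.1, hz.2.2⟩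
  obtain ⟨U, hreachU, hghU, hupU, hlowU, htailU, hclrU, huntU⟩ :=
    clearTail hD hI hd hne0 (T.cells.filter (fun p => p.1 = r ∧ d < p.2)).card T
      rfl rfl (fun p _ => Iff.rfl) (fun c _ => Iff.rfl) (fun c h => h)
      (fun c _ h2 h3 => absurd h2 h3) (fun c _ s _ => Iff.rfl)
  -- column d is untouched by the clearing
  have hdunt : ∀ s, s < r → (((s, d) ∈ U.cells) ↔ (s, d) ∈ T.cells) :=
    huntU d (fun h => absurd h (lt_irrefl d))
  have hUrd : (r, d) ∈ U.cells :=
    (hlowU d (le_refl d)).mpr ((hI.agree (r, d) (le_refl r)).mpr hd_D)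
  have hHolesmem : ∀ s, s ∈ Holes ↔ (1 ≤ s ∧ s < r ∧ (s, d) ∉ T.cells) := by
    intro s
    rw [hHolesdef, Finset.mem_filter, Finset.mem_range]
    tauto
  have hHneU : Holes.Nonempty := ⟨z, (hHolesmem z).mpr ⟨hz.2.1, hz.1, hz.2.2⟩⟩
  set smin := Holes.min' hHneU with hsmindef
  have hsminmem := Holes.min'_mem hHneU
  obtain ⟨hsmin1, hsminr, hsminhole⟩ := (hHolesmem smin).mp hsminmem
  -- the ghost drop down column d
  have hdropclean : ∀ s ∈ Holes, s ≠ smin → ∀ c', d < c' → (s, c') ∉ U.cells := by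
    intro s hs hsne c' hc' hmem
    obtain ⟨hs1, hsr, hsd⟩ := (hHolesmem s).mp hs
    have hsmins : smin < s := lt_of_le_of_ne (Holes.min'_le s hs) (fun h => hsne h.symm)
    have hWs : ∀ c'', d < c'' → (s, c'') ∉ T.cells :=
      hI.W r d hd (le_refl r) s hs1 hsr hsd ⟨smin, hsmin1, hsmins, hsminhole⟩
    by_cases hcl : (r, c') ∈ T.cells
    · obtain ⟨m', hm'1, hm'r, hm'hole, hm'min, hm'desc⟩ := hclrU c' hc' hcl
      rcases (hm'desc s hsr).mp hmem with h | h
      · exact hWs c' hc' h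
      · obtain ⟨ρ', hrρ', hρ'dark⟩ :=
          tailDark hd ((hI.agree (r, c') (le_refl r)).mp hcl) hc'
        obtain ⟨s₃, hs₃1, hs₃le, hs₃hole⟩ :=
          hI.Mi r d ρ' c' hd hρ'dark (le_refl r) (le_of_lt hrρ') hc'
            smin hsmin1 hsminr hsminhole
        have : ¬ s₃ < m' := fun hlt => hs₃hole (hm'min s₃ hs₃1 hlt)
        omega
    · exact hWs c' hc' ((huntU c' (fun _ => hcl) s hsr).mp hmem)
  obtain ⟨T₁, hreach₁, hcellsT₁, hghT₁, hcardT₁⟩ :=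
    ghostDescend Holes.card U r d Holes rfl hUrd
      (fun c' hc' => htailU c' hc')
      (by
        intro s _ hmem
        rw [hghU] at hmem
        obtain ⟨ρ₂, hρ₂dark, hρ₂r⟩ := hI.gcol _ hmem
        have : (ρ₂, d) = (r, d) := dark_colU hρ₂dark hd rfl
        have : ρ₂ = r := congrArg Prod.fst this
        omega)
      (by
        intro s
        rw [hHolesmem s]
        constructor
        · rintro ⟨h1, h2, h3⟩
          exact ⟨h1, h2, fun hmem => h3 ((hdunt s h2).mp hmem)⟩
        · rintro ⟨h1, h2, h3⟩
          exact ⟨h1, h2, fun hmem => h3 ((hdunt s h2).mpr hmem)⟩)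
      hHneU hdropclean
  -- membership descriptions of T₁
  have hT₁mem : ∀ a b : ℕ, ((a, b) ∈ T₁.cells) ↔
      ((a, b) ∈ U.cells ∨ (b = d ∧ a ∈ Holes)) := by
    intro a b
    rw [hcellsT₁, Finset.mem_union, Finset.mem_image]
    constructor
    · rintro (h | ⟨s, hs, heq⟩)
      · exact Or.inl h
      · right
        have h1 : s = a := congrArg Prod.fst heq
        have h2 : d = b := congrArg Prod.snd heq
        subst h1; subst h2
        exact ⟨rfl, hs⟩
    · rintro (h | ⟨hb, ha⟩)
      · exact Or.inl h
      · subst hb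
        exact Or.inr ⟨a, ha, rfl⟩
  have hT₁memne : ∀ a b : ℕ, b ≠ d → (((a, b) ∈ T₁.cells) ↔ (a, b) ∈ U.cells) := by
    intro a b hb
    rw [hT₁mem]
    constructor
    · rintro (h | ⟨h, -⟩)
      · exact h
      · exact absurd h hb
    · exact Or.inl
  have hT₁gmem : ∀ a b : ℕ, ((a, b) ∈ T₁.ghosts) ↔
      ((a, b) ∈ T.ghosts ∨ (b = d ∧ (a = r ∨ (a ∈ Holes ∧ a ≠ smin)))) := by
    intro a b
    rw [hghT₁, hghU, Finset.mem_union, Finset.mem_image]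
    constructor
    · rintro (h | ⟨s, hs, heq⟩)
      · exact Or.inl h
      · right
        have h1 : s = a := congrArg Prod.fst heq
        have h2 : d = b := congrArg Prod.snd heq
        subst h1; subst h2
        rcases Finset.mem_insert.mp hs with h | h
        · exact ⟨rfl, Or.inl h⟩
        · rw [Finset.mem_erase] at h
          exact ⟨rfl, Or.inr ⟨h.2, h.1⟩⟩
    · rintro (h | ⟨hb, ha⟩)
      · exact Or.inl h
      · subst hb
        right
        refine ⟨a, ?_, rfl⟩
        rcases ha with h | ⟨h1, h2⟩
        · exact Finset.mem_insert.mpr (Or.inl h)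
        · exact Finset.mem_insert.mpr (Or.inr (Finset.mem_erase.mpr ⟨h2, h1⟩))
  have hfull : ∀ s, 1 ≤ s → s < r → (s, d) ∈ T₁.cells := by
    intro s hs1 hsr
    rw [hT₁mem]
    by_cases h : (s, d) ∈ T.cells
    · exact Or.inl ((hdunt s hsr).mpr h)
    · exact Or.inr ⟨rfl, (hHolesmem s).mpr ⟨hs1, hsr, h⟩⟩
  -- the cleared/untouched classification, relative to T
  have hcleared : ∀ c, d < c → (r, c) ∈ T.cells →
      ∃ m, 1 ≤ m ∧ m < r ∧ (m, c) ∉ T.cells ∧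
        (∀ s, 1 ≤ s → s < m → (s, c) ∈ T.cells) ∧
        (∀ s, s < r → (((s, c) ∈ U.cells) ↔ ((s, c) ∈ T.cells ∨ s = m))) :=
    fun c hc hcT => hclrU c hc hcT
  -- minimum-hole comparison: for darks c < c' (both right of d and above r),
  -- the cleared bottom hole m' of c' is ≤ any T-hole of c below r.
  have hmle : ∀ {ρc c ρ' c' : ℕ}, (ρc, c) ∈ dark D → (ρ', c') ∈ dark D →
      r ≤ ρc → r ≤ ρ' → c < c' → d < c' → (r, c') ∈ T.cells →
      ∀ {m' : ℕ}, (∀ s, 1 ≤ s → s < m' → (s, c') ∈ T.cells) →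
      ∀ t, 1 ≤ t → t < r → (t, c) ∉ T.cells → m' ≤ t := by
    intro ρc c ρ' c' hdkc hdkc' hρc hρ' hcc' hdc' hc'T m' hm'min t ht1 htr hthole
    obtain ⟨s₃, hs₃1, hs₃le, hs₃hole⟩ :=
      hI.Mi ρc c ρ' c' hdkc hdkc' hρc hρ' hcc' t ht1 (by omega) hthole
    have : ¬ s₃ < m' := fun hlt => hs₃hole (hm'min s₃ hs₃1 hlt)
    omega
  -- Inv at r+1
  have hInv : Inv D T₁ (r + 1) := by
    refine ⟨?_, ?_, ?_, ?_, ?_, ?_⟩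
    · -- agree
      rintro ⟨a, b⟩ hp
      simp only at hp
      rw [hT₁mem]
      have hnotH : a ∉ Holes := by
        intro h
        have := ((hHolesmem a).mp h).2.1
        omega
      have h1 : ((a, b) ∈ U.cells) ↔ (a, b) ∈ T.cells := hupU (a, b) (by omega)
      rw [h1]
      rw [hI.agree (a, b) (by omega : r ≤ a)]
      constructor
      · rintro (h | ⟨-, h⟩)
        · exact h
        · exact absurd h hnotH
      · exact Or.inl
    · -- gsub
      rintro ⟨a, b⟩ hg
      rw [hT₁gmem] at hg
      rcases hg with hg | ⟨hb, ha⟩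
      · have hcell : (a, b) ∈ T.cells := hI.gsub hg
        have har : a < r := hI.glow _ hg
        obtain ⟨ρ₂, hρ₂dark, hρ₂r⟩ := hI.gcol _ hg
        have hbunt : ((a, b) ∈ U.cells) ↔ (a, b) ∈ T.cells := by
          refine huntU b ?_ a har
          intro h1 h2
          exfalso
          obtain ⟨ρ₃, hrρ₃, hρ₃dark⟩ :=
            tailDark hd ((hI.agree (r, b) (le_refl r)).mp h2) h1
          have : (ρ₂, b) = (ρ₃, b) := dark_colU hρ₂dark hρ₃dark rfl
          have : ρ₂ = ρ₃ := congrArg Prod.fst this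
          omega
        rw [hT₁mem]
        exact Or.inl (hbunt.mpr hcell)
      · subst hb
        rcases ha with h | ⟨h1, -⟩
        · subst h
          rw [hT₁mem]
          exact Or.inl hUrd
        · rw [hT₁mem]
          exact Or.inr ⟨rfl, h1⟩
    · -- glow
      rintro ⟨a, b⟩ hg
      rw [hT₁gmem] at hg
      simp only
      rcases hg with hg | ⟨-, ha⟩
      · have := hI.glow _ hg; omega
      · rcases ha with h | ⟨h, -⟩
        · omega
        · have := ((hHolesmem a).mp h).2.1; omega
    · -- gcol
      rintro ⟨a, b⟩ hg
      rw [hT₁gmem] at hg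
      simp only
      rcases hg with hg | ⟨hb, -⟩
      · obtain ⟨ρ₂, h1, h2⟩ := hI.gcol _ hg
        exact ⟨ρ₂, h1, by omega⟩
      · subst hb
        exact ⟨r, hd, by omega⟩
    · -- W
      intro ρ c hdk hρ1 s hs1 hsr1 hole hnm c' hcc'
      have hdc : d < c := dark_incr hD hd hdk (by omega)
      have hc'd : c' ≠ d := by omega
      rw [hT₁memne _ _ hc'd]
      rcases Nat.lt_or_ge s r with hsr | hsr
      case inr =>
        -- s = r: row r of U is empty right of d
        have hs_r : s = r := by omega
        subst hs_r
        exact htailU c' (by omega)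
      case inl =>
        rw [hT₁memne _ _ (by omega : c ≠ d)] at hole
        -- produce a T-hole at (s,c) together with a smaller T-hole
        have key : (s, c) ∉ T.cells ∧ ∃ t, 1 ≤ t ∧ t < s ∧ (t, c) ∉ T.cells := by
          by_cases hcl : (r, c) ∈ T.cells
          · obtain ⟨m', hm'1, hm'r, hm'hole, hm'min, hm'desc⟩ := hcleared c hdc hcl
            have h1 : (s, c) ∉ T.cells ∧ s ≠ m' := by
              constructor
              · intro h; exact hole ((hm'desc s hsr).mpr (Or.inl h))
              · intro h; exact hole ((hm'desc s hsr).mpr (Or.inr h))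
            have hm's : m' < s := by
              rcases Nat.lt_or_ge s m' with h | h
              · exact absurd (hm'min s hs1 h) h1.1
              · omega
            exact ⟨h1.1, m', hm'1, hm's, hm'hole⟩
          · have huc := huntU c (fun _ => hcl)
            have h1 : (s, c) ∉ T.cells := fun h => hole ((huc s hsr).mpr h)
            obtain ⟨s', hs'1, hs's, hs'hole⟩ := hnm
            have hs'r : s' < r := by omega
            rw [hT₁memne _ _ (by omega : c ≠ d)] at hs'hole
            have h2 : (s', c) ∉ T.cells := fun h => hs'hole ((huc s' hs'r).mpr h)
            exact ⟨h1, s', hs'1, hs's, h2⟩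
        obtain ⟨hholeT, t, ht1, hts, hthole⟩ := key
        have hWs : ∀ c'', c < c'' → (s, c'') ∉ T.cells :=
          hI.W ρ c hdk (by omega) s hs1 hsr hholeT ⟨t, ht1, hts, hthole⟩
        by_cases hcl' : (r, c') ∈ T.cells
        · obtain ⟨m'', hm''1, hm''r, hm''hole, hm''min, hm''desc⟩ :=
            hcleared c' (by omega) hcl'
          obtain ⟨ρ'', hrρ'', hρ''dark⟩ :=
            tailDark hd ((hI.agree (r, c') (le_refl r)).mp hcl') (by omega)
          have hm''t : m'' ≤ t :=
            hmle hdk hρ''dark (by omega) (le_of_lt hrρ'') hcc' (by omega) hcl'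
              hm''min t ht1 (by omega) hthole
          intro hmem
          rcases (hm''desc s hsr).mp hmem with h | h
          · exact hWs c' hcc' h
          · omega
        · intro hmem
          exact hWs c' hcc' ((huntU c' (fun _ => hcl') s hsr).mp hmem)
    · -- Mi
      intro ρ c ρ' c' hdk hdk' hρ1 hρ'1 hcc' s hs1 hsρ hole
      have hdc : d < c := dark_incr hD hd hdk (by omega)
      have hdc' : d < c' := by omega
      rcases Nat.lt_or_ge s r with hsr | hsr
      case inr =>
        rcases Nat.eq_or_lt_of_le hsr with hsr' | hsr'
        · -- s = r
          refine ⟨r, hr1, by omega, ?_⟩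
          rw [hT₁memne _ _ (by omega : c' ≠ d)]
          exact htailU c' hdc'
        · -- s > r
          rw [hT₁memne _ _ (by omega : c ≠ d)] at hole
          have h1 : (s, c) ∉ T.cells := fun h => hole ((hupU (s, c) (by omega)).mpr h)
          have h2 : (s, c) ∉ D := fun h => h1 ((hI.agree (s, c) (by omega)).mpr h)
          have h3 : (s, c') ∉ D :=
            holeLemma hD hsρ (dark_mem_D hdk) h2 (le_of_lt hcc')
          refine ⟨s, hs1, le_refl s, ?_⟩
          rw [hT₁memne _ _ (by omega : c' ≠ d)]
          intro hmem
          exact h3 ((hI.agree (s, c') (by omega)).mp ((hupU (s, c') (by omega)).mp hmem))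
      case inl =>
        rw [hT₁memne _ _ (by omega : c ≠ d)] at hole
        by_cases hcl : (r, c) ∈ T.cells
        · -- c cleared
          obtain ⟨m', hm'1, hm'r, hm'hole, hm'min, hm'desc⟩ := hcleared c hdc hcl
          have h1 : (s, c) ∉ T.cells ∧ s ≠ m' := by
            constructor
            · intro h; exact hole ((hm'desc s hsr).mpr (Or.inl h))
            · intro h; exact hole ((hm'desc s hsr).mpr (Or.inr h))
          have hm's : m' < s := by
            rcases Nat.lt_or_ge s m' with h | h
            · exact absurd (hm'min s hs1 h) h1.1
            · omega
          have hWs : ∀ c'', c < c'' → (s, c'') ∉ T.cells :=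
            hI.W ρ c hdk (by omega) s hs1 hsr h1.1 ⟨m', hm'1, hm's, hm'hole⟩
          refine ⟨s, hs1, le_refl s, ?_⟩
          rw [hT₁memne _ _ (by omega : c' ≠ d)]
          by_cases hcl' : (r, c') ∈ T.cells
          · obtain ⟨m'', hm''1, hm''r, hm''hole, hm''min, hm''desc⟩ :=
              hcleared c' hdc' hcl'
            obtain ⟨ρ'', hrρ'', hρ''dark⟩ :=
              tailDark hd ((hI.agree (r, c') (le_refl r)).mp hcl') hdc'
            have hm''m' : m'' ≤ m' :=
              hmle hdk hρ''dark (by omega) (le_of_lt hrρ'') hcc' hdc' hcl'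
                hm''min m' hm'1 (by omega) hm'hole
            intro hmem
            rcases (hm''desc s hsr).mp hmem with h | h
            · exact hWs c' hcc' h
            · omega
          · intro hmem
            exact hWs c' hcc' ((huntU c' (fun _ => hcl') s hsr).mp hmem)
        · -- c untouched
          have huc := huntU c (fun _ => hcl)
          have h1 : (s, c) ∉ T.cells := fun h => hole ((huc s hsr).mpr h)
          by_cases hnm2 : ∃ t, 1 ≤ t ∧ t < s ∧ (t, c) ∉ T.cells
          · obtain ⟨t, ht1, hts, hthole⟩ := hnm2
            have hWs : ∀ c'', c < c'' → (s, c'') ∉ T.cells :=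
              hI.W ρ c hdk (by omega) s hs1 hsr h1 ⟨t, ht1, hts, hthole⟩
            refine ⟨s, hs1, le_refl s, ?_⟩
            rw [hT₁memne _ _ (by omega : c' ≠ d)]
            by_cases hcl' : (r, c') ∈ T.cells
            · obtain ⟨m'', hm''1, hm''r, hm''hole, hm''min, hm''desc⟩ :=
                hcleared c' hdc' hcl'
              obtain ⟨ρ'', hrρ'', hρ''dark⟩ :=
                tailDark hd ((hI.agree (r, c') (le_refl r)).mp hcl') hdc'
              have hm''t : m'' ≤ t :=
                hmle hdk hρ''dark (by omega) (le_of_lt hrρ'') hcc' hdc' hcl'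
                  hm''min t ht1 (by omega) hthole
              intro hmem
              rcases (hm''desc s hsr).mp hmem with h | h
              · exact hWs c' hcc' h
              · omega
            · intro hmem
              exact hWs c' hcc' ((huntU c' (fun _ => hcl') s hsr).mp hmem)
          · -- s is the bottom T-hole of column c
            push_neg at hnm2
            by_cases hcl' : (r, c') ∈ T.cells
            · -- impossible by contiguity
              exfalso
              have hcD : (r, c) ∉ D := fun h => hcl ((hI.agree (r, c) (le_refl r)).mpr h)
              have hc'D : (r, c') ∈ D := (hI.agree (r, c') (le_refl r)).mp hcl'
              exact hcD (hD.2.1 r d c c' hd_D hc'D (by omega) (by omega))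
            · obtain ⟨s₃, hs₃1, hs₃le, hs₃hole⟩ :=
                hI.Mi ρ c ρ' c' hdk hdk' (by omega) (by omega) hcc' s hs1 hsρ h1
              refine ⟨s₃, hs₃1, hs₃le, ?_⟩
              rw [hT₁memne _ _ (by omega : c' ≠ d)]
              intro hmem
              exact hs₃hole ((huntU c' (fun _ => hcl') s₃ (by omega)).mp hmem)
  -- the counting identity
  have hNeq : NN D T r = Holes.card + NN D T₁ (r + 1) := by
    rw [NN_succ_of_some (T := T) hd, hcntT]
    congr 1
    rw [NN, NN]
    apply Finset.sum_congr rfl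
    rintro ⟨ρ, c⟩ hq
    rw [Finset.mem_filter] at hq
    obtain ⟨hqdark, hqr⟩ := hq
    simp only at hqr
    have hdc : d < c := dark_incr hD hd hqdark (by omega : (r, d).1 < (ρ, c).1)
    rw [cnt, cnt]
    simp only
    by_cases hcl : (r, c) ∈ T.cells
    · -- cleared column: holes shuffle, count preserved
      obtain ⟨m', hm'1, hm'r, hm'hole, hm'min, hm'desc⟩ := hcleared c hdc hcl
      have hset : (Finset.range ρ).filter (fun s => 1 ≤ s ∧ (s, c) ∉ T₁.cells) =
          insert r (((Finset.range ρ).filter (fun s => 1 ≤ s ∧ (s, c) ∉ T.cells)).erase m') := by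
        ext s
        simp only [Finset.mem_insert, Finset.mem_erase, Finset.mem_filter, Finset.mem_range]
        constructor
        · rintro ⟨hsρ, hs1, hshole⟩
          rw [hT₁memne _ _ (by omega : c ≠ d)] at hshole
          rcases Nat.lt_trichotomy s r with h | h | h
          · right
            have hdesc := (hm'desc s h).mpr
            refine ⟨?_, hsρ, hs1, fun hm => hshole (hdesc (Or.inl hm))⟩
            intro hsm
            exact hshole (hdesc (Or.inr hsm))
          · exact Or.inl h
          · right
            refine ⟨by omega, hsρ, hs1, ?_⟩
            intro hmem
            exact hshole ((hupU (s, c) (by omega)).mpr hmem)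
        · rintro (h | ⟨hsm, hsρ, hs1, hshole⟩)
          · subst h
            refine ⟨by omega, hr1, ?_⟩
            rw [hT₁memne _ _ (by omega : c ≠ d)]
            exact htailU c hdc
          · refine ⟨hsρ, hs1, ?_⟩
            rw [hT₁memne _ _ (by omega : c ≠ d)]
            rcases Nat.lt_trichotomy s r with h | h | h
            · intro hmem
              rcases (hm'desc s h).mp hmem with h' | h'
              · exact hshole h'
              · exact hsm h'
            · subst h
              exact htailU c hdc
            · intro hmem
              exact hshole ((hupU (s, c) (by omega)).mp hmem)
      rw [hset]
      have hm'mem : m' ∈ (Finset.range ρ).filter (fun s => 1 ≤ s ∧ (s, c) ∉ T.cells) :=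
        Finset.mem_filter.mpr ⟨Finset.mem_range.mpr (by omega), hm'1, hm'hole⟩
      have hrnot : r ∉ ((Finset.range ρ).filter
          (fun s => 1 ≤ s ∧ (s, c) ∉ T.cells)).erase m' := by
        intro h
        have := (Finset.mem_filter.mp (Finset.mem_of_mem_erase h)).2.2
        exact this hcl
      rw [Finset.card_insert_of_notMem hrnot, Finset.card_erase_of_mem hm'mem]
      have : 1 ≤ ((Finset.range ρ).filter (fun s => 1 ≤ s ∧ (s, c) ∉ T.cells)).card :=
        Finset.card_pos.mpr ⟨m', hm'mem⟩
      omega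
    · -- untouched column: identical holes
      congr 1
      apply Finset.filter_congr
      intro s hs
      rw [Finset.mem_range] at hs
      constructor
      · rintro ⟨hs1, hshole⟩
        refine ⟨hs1, ?_⟩
        rw [hT₁memne _ _ (by omega : c ≠ d)]
        rcases Nat.lt_trichotomy s r with h | h | h
        · intro hmem
          exact hshole ((huntU c (fun _ => hcl) s h).mp hmem)
        · subst h
          exact htailU c hdc
        · intro hmem
          exact hshole ((hupU (s, c) (by omega)).mp hmem)
      · rintro ⟨hs1, hshole⟩
        rw [hT₁memne _ _ (by omega : c ≠ d)] at hshole
        refine ⟨hs1, ?_⟩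
        rcases Nat.lt_trichotomy s r with h | h | h
        · intro hmem
          exact hshole ((huntU c (fun _ => hcl) s h).mpr hmem)
        · subst h
          exact fun hmem => hcl hmem
        · intro hmem
          exact hshole ((hupU (s, c) (by omega)).mpr hmem)
  exact ⟨T₁, Holes.card, Relation.ReflTransGen.trans hreachU hreach₁, hInv,
    by rw [hcardT₁, hghU], hNeq⟩

end SkewAux

namespace SkewAux

lemma inv_init {D : Finset (ℕ × ℕ)} (hD : IsGenSkew D) :
    Inv D ⟨D, ∅⟩ 0 := by
  refine ⟨fun p _ => Iff.rfl, Finset.empty_subset _,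
    fun g hg => absurd hg (Finset.notMem_empty g),
    fun g hg => absurd hg (Finset.notMem_empty g), ?_, ?_⟩
  · intro ρ c hdk hρ s hs1 hsr
    omega
  · intro ρ c ρ' c' hdk hdk' hρ hρ' hcc' s hs1 hsρ hole
    exact ⟨s, hs1, le_refl s,
      holeLemma hD hsρ (dark_mem_D hdk) hole (le_of_lt hcc')⟩

lemma NN_zero (D : Finset (ℕ × ℕ)) : NN D ⟨D, ∅⟩ 0 = sf D := by
  rw [sf_eq_sum, NN, Finset.filter_true_of_mem (fun _ _ => Nat.zero_le _)]

lemma mainInd {D : Finset (ℕ × ℕ)} (hD : IsGenSkew D) :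
    ∀ i r (T : Diagram), D.sup Prod.fst + 1 ≤ r + i → Inv D T r →
    ∃ T', Relation.ReflTransGen KStep T T' ∧
      T'.ghosts.card = T.ghosts.card + NN D T r := by
  intro i
  induction i with
  | zero =>
    intro r T hle hI
    refine ⟨T, Relation.ReflTransGen.refl, ?_⟩
    have hemp : (dark D).filter (fun q => r ≤ q.1) = ∅ := by
      apply Finset.filter_eq_empty_iff.mpr
      intro q hq
      have := dark_row_le_sup hq
      omega
    rw [NN, hemp, Finset.sum_empty]
    omega
  | succ i ih =>
    intro r T hle hI
    obtain ⟨T₁, h, hreach, hI₁, hcard, hNeq⟩ := round hD hI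
    obtain ⟨T', hreach', hcard'⟩ := ih (r + 1) T₁ (by omega) hI₁
    exact ⟨T', hreach.trans hreach', by omega⟩

/-- All reachable diagrams stay within a fixed bounding box. -/
lemma reach_box (D : Finset (ℕ × ℕ)) :
    ∀ T : Diagram, Relation.ReflTransGen KStep ⟨D, ∅⟩ T →
      T.cells ⊆ (Finset.range (D.sup Prod.fst + 1)) ×ˢ (D.image Prod.snd) ∧
      T.ghosts ⊆ (Finset.range (D.sup Prod.fst + 1)) ×ˢ (D.image Prod.snd) := by
  intro T h
  induction h with
  | refl =>
    constructor
    · intro p hp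
      rw [Finset.mem_product, Finset.mem_range]
      have hpD : p ∈ D := hp
      exact ⟨by have := Finset.le_sup (f := Prod.fst) hpD; omega,
        Finset.mem_image.mpr ⟨p, hpD, rfl⟩⟩
    · intro p hp
      exact absurd hp (Finset.notMem_empty p)
  | tail hsteps hstep ih =>
    obtain ⟨ihc, ihg⟩ := ih
    obtain ⟨r, c0, rhat, hmov, hcase⟩ := hstep
    have hrc : (r, c0) ∈ (Finset.range (D.sup Prod.fst + 1)) ×ˢ (D.image Prod.snd) :=
      ihc hmov.1.1
    have hrhat : (rhat, c0) ∈ (Finset.range (D.sup Prod.fst + 1)) ×ˢ (D.image Prod.snd) := by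
      rw [Finset.mem_product, Finset.mem_range] at hrc ⊢
      have := hmov.2.2.2.1
      exact ⟨by omega, hrc.2⟩
    rcases hcase with h | h <;> subst h
    · constructor
      · intro p hp
        rcases Finset.mem_insert.mp hp with h | h
        · subst h; exact hrhat
        · exact ihc (Finset.mem_of_mem_erase h)
      · exact ihg
    · constructor
      · intro p hp
        rcases Finset.mem_insert.mp hp with h | h
        · subst h; exact hrhat
        · exact ihc h
      · intro p hp
        rcases Finset.mem_insert.mp hp with h | h
        · subst h; exact hrc
        · exact ihg h

end SkewAux


/-- If D is a generalized skew diagram, then MaxG(D) ≥ sf(D);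
indeed some diagram in KKD(D) has exactly sf(D) ghost cells. -/
theorem genSkew_maxG_ge_sf (D : Finset (ℕ × ℕ)) (hD : IsGenSkew D) :
    (∃ T ∈ KKD ⟨D, ∅⟩, T.ghosts.card = sf D) ∧ sf D ≤ MaxG ⟨D, ∅⟩ := by
  obtain ⟨T', hreach, hcard⟩ :=
    SkewAux.mainInd hD (D.sup Prod.fst + 1) 0 ⟨D, ∅⟩ (by omega) (SkewAux.inv_init hD)
  have hghosts : T'.ghosts.card = sf D := by
    rw [hcard, SkewAux.NN_zero]
    simp [Diagram.ghosts]
  have hmem : T' ∈ KKD ⟨D, ∅⟩ := hreach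
  refine ⟨⟨T', hmem, hghosts⟩, ?_⟩
  have hsfmem : sf D ∈ {n | ∃ T ∈ KKD ⟨D, ∅⟩, T.ghosts.card = n} := ⟨T', hmem, hghosts⟩
  have hbdd : BddAbove {n | ∃ T ∈ KKD ⟨D, ∅⟩, T.ghosts.card = n} := by
    refine ⟨((Finset.range (D.sup Prod.fst + 1)) ×ˢ (D.image Prod.snd)).card, ?_⟩
    rintro n ⟨T, hT, hn⟩
    rw [← hn]
    exact Finset.card_le_card (SkewAux.reach_box D T hT).2
  exact le_csSup hbdd hsfmem
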